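/- Let A be a symmetric adversary over a finite set Π and Q ⊆ Π. For all L, L' ⊆ Π with |L'| = |L| and L ∩ Q ⊆ L' ∩ Q, one has setcon(A|_{L',Q}) ≥ setcon(A|_{L,Q}). -/

import Mathlib

variable {α : Type*} [DecidableEq α]

/-- The restriction `A|_P` of an adversary `A` to a set of processes `P`:
the live sets of `A` that are contained in `P`. -/
def restrict (A : Finset (Finset α)) (P : Finset α) : Finset (Finset α) :=
  A.filter fun S => S ⊆ P

/-- The set consensus power `setcon A` of an adversary `A`:
`setcon ∅ = 0` and, for `A ≠ ∅`,
`setcon A = 1 + max_{S ∈ A} min_{a ∈ S} setcon (A|_{S \ {a}})`. -/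
def setcon (A : Finset (Finset α)) : ℕ :=
  if A = ∅ then 0
  else 1 + A.attach.sup fun S =>
    WithTop.untopD 0 (S.1.attach.image fun a => setcon (restrict A (S.1.erase a.1))).min
termination_by A.card
decreasing_by
  apply Finset.card_lt_card
  rw [Finset.ssubset_def]
  refine ⟨Finset.filter_subset _ _, fun hsub => ?_⟩
  have hmem := hsub S.2
  rw [restrict, Finset.mem_filter] at hmem
  exact Finset.notMem_erase a.1 S.1 (hmem.2 a.2)

/-- The restriction `A|_{P,Q}`: live sets of `A` contained in `P` that intersect `Q`. -/
def restrictTo (A : Finset (Finset α)) (P Q : Finset α) : Finset (Finset α) :=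
  (restrict A P).filter fun S => (S ∩ Q).Nonempty

/-- An adversary is fair if for all `P` and all `Q ⊆ P`,
`setcon (A|_{P,Q}) = min |Q| (setcon (A|_P))`. -/
def Fair (A : Finset (Finset α)) : Prop :=
  ∀ P Q : Finset α, Q ⊆ P →
    setcon (restrictTo A P Q) = min Q.card (setcon (restrict A P))

/-- `csize A`: the minimal cardinality of a hitting set of `A`, i.e. of a set
intersecting every live set of `A`. -/
noncomputable def csize (A : Finset (Finset α)) : ℕ :=
  sInf {k | ∃ H : Finset α, H.card = k ∧ ∀ S ∈ A, (H ∩ S).Nonempty}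

/-!
Induction on `|L|`. By symmetry, every live set `S` of `A|_{L,Q}` has a partner `S'` of the same
size in `A|_{L',Q}` with `S ∩ Q ⊆ S'`. For every `b ∈ S'` some `a ∈ S` keeps this relation
between `S \ {a}` and `S' \ {b}` (take `a = b` if `b ∈ S`, otherwise some `a ∈ S \ Q`), so the
induction hypothesis compares each term of the max-min recursion for `L` with one for `L'`.
-/

open Finset hiding restrict

namespace Finset

variable {ι β : Type*} [LinearOrder β]

theorem untopD_min_image_le {s t : Finset ι} {f g : ι → β} (d : β) (ht : t.Nonempty)
    (h : ∀ b ∈ t, ∃ a ∈ s, f a ≤ g b) :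
    WithTop.untopD d (s.image f).min ≤ WithTop.untopD d (t.image g).min := by
  obtain ⟨b, hbt, hb⟩ := mem_image.1 (min'_mem _ (ht.image g))
  obtain ⟨a, has, hab⟩ := h b hbt
  rw [← coe_min' ((ht.image g)), ← coe_min' ⟨f a, mem_image_of_mem f has⟩]
  simp only [WithTop.untopD_coe]
  calc (s.image f).min' _ ≤ f a := min'_le _ _ (mem_image_of_mem f has)
    _ ≤ g b := hab
    _ = _ := hb

variable [DecidableEq ι]

theorem exists_erase_inter_subset_erase_inter {S S' : Finset ι} (Q : Finset ι)
    (hcard : S'.card ≤ S.card) (hSQ : S ∩ Q ⊆ S') {b : ι} (hb : b ∈ S') :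
    ∃ a ∈ S, S.erase a ∩ Q ⊆ S'.erase b ∩ Q := by
  by_cases hbS : b ∈ S
  · refine ⟨b, hbS, subset_inter ?_ inter_subset_right⟩
    rw [erase_inter]
    exact erase_subset_erase b hSQ
  · have hSQ' : S ∩ Q ⊆ S'.erase b := fun x hx =>
      mem_erase.2 ⟨fun hxb => hbS (hxb ▸ (mem_inter.1 hx).1), hSQ hx⟩
    have hlt : (S ∩ Q).card < S.card := by
      have := card_le_card hSQ'
      rw [card_erase_of_mem hb] at this
      have := card_pos.2 ⟨b, hb⟩
      omega
    obtain ⟨a, haS, haQ⟩ := not_subset.1 fun hSQ => hlt.ne (by rw [inter_eq_left.2 hSQ])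
    refine ⟨a, haS, fun x hx => mem_inter.2 ⟨hSQ' ?_, (mem_inter.1 hx).2⟩⟩
    exact inter_subset_inter_right (erase_subset a S) hx

end Finset

theorem setcon_empty : setcon (∅ : Finset (Finset α)) = 0 := by
  rw [setcon, if_pos rfl]

theorem setcon_of_ne_empty {A : Finset (Finset α)} (hA : A ≠ ∅) :
    setcon A = 1 + A.sup fun S =>
      WithTop.untopD 0 (S.image fun a => setcon (restrict A (S.erase a))).min := by
  rw [setcon, if_neg hA, ← sup_attach A]
  congr 2
  funext S
  congr 2
  ext
  simp

theorem setcon_le_setcon {A B : Finset (Finset α)}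
    (h : ∀ S ∈ A, ∃ S' ∈ B, S'.Nonempty ∧ ∀ b ∈ S', ∃ a ∈ S,
      setcon (restrict A (S.erase a)) ≤ setcon (restrict B (S'.erase b))) :
    setcon A ≤ setcon B := by
  rcases eq_or_ne A ∅ with rfl | hA
  · rw [setcon_empty]
    exact Nat.zero_le _
  obtain ⟨S₀, hS₀⟩ := nonempty_iff_ne_empty.2 hA
  obtain ⟨S₀', hS₀', -⟩ := h S₀ hS₀
  rw [setcon_of_ne_empty hA, setcon_of_ne_empty (ne_empty_of_mem hS₀')]
  refine Nat.add_le_add_left (Finset.sup_le fun S hS => ?_) 1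
  obtain ⟨S', hS', hS'ne, hle⟩ := h S hS
  exact (untopD_min_image_le 0 hS'ne hle).trans
    (le_sup (f := fun S =>
      WithTop.untopD 0 (S.image fun a => setcon (restrict B (S.erase a))).min) hS')

theorem mem_restrictTo {A : Finset (Finset α)} {P Q S : Finset α} :
    S ∈ restrictTo A P Q ↔ S ∈ A ∧ S ⊆ P ∧ (S ∩ Q).Nonempty := by
  simp only [restrictTo, restrict, mem_filter, and_assoc]

theorem restrict_restrictTo_of_subset (A : Finset (Finset α)) {L P : Finset α} (Q : Finset α)
    (h : P ⊆ L) : restrict (restrictTo A L Q) P = restrictTo A P Q := by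
  ext S
  simp only [restrict, mem_filter, mem_restrictTo]
  exact ⟨fun ⟨⟨hA, _, hQ⟩, hP⟩ => ⟨hA, hP, hQ⟩,
    fun ⟨hA, hP, hQ⟩ => ⟨⟨hA, hP.trans h, hQ⟩, hP⟩⟩

theorem exists_mem_restrictTo_card_eq {A : Finset (Finset α)}
    (hsym : ∀ S ∈ A, ∀ S' : Finset α, S'.card = S.card → S' ∈ A)
    {Q L L' S : Finset α} (hcard : L'.card = L.card) (hLQ : L ∩ Q ⊆ L' ∩ Q)
    (hS : S ∈ restrictTo A L Q) :
    ∃ S' ∈ restrictTo A L' Q, S'.card = S.card ∧ S ∩ Q ⊆ S' := by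
  obtain ⟨hSA, hSL, hSQ⟩ := mem_restrictTo.1 hS
  have hSQL' : S ∩ Q ⊆ L' :=
    (inter_subset_inter_right hSL).trans (hLQ.trans inter_subset_left)
  obtain ⟨S', hSQS', hS'L', hS'card⟩ := exists_subsuperset_card_eq hSQL'
    (card_le_card inter_subset_left) (hcard ▸ card_le_card hSL)
  refine ⟨S', mem_restrictTo.2 ⟨hsym S hSA S' hS'card, hS'L', ?_⟩, hS'card, hSQS'⟩
  exact hSQ.mono (subset_inter hSQS' inter_subset_right)

theorem setcon_restrictTo_mono_of_symmetric_general (A : Finset (Finset α))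
    (hsym : ∀ S ∈ A, ∀ S' : Finset α, S'.card = S.card → S' ∈ A)
    (Q L L' : Finset α) (hcard : L'.card = L.card) (hLQ : L ∩ Q ⊆ L' ∩ Q) :
    setcon (restrictTo A L Q) ≤ setcon (restrictTo A L' Q) := by
  induction hn : L.card using Nat.strong_induction_on generalizing L L' with
  | _ n ih =>
    apply setcon_le_setcon
    intro S hS
    obtain ⟨S', hS', hS'card, hSQ⟩ := exists_mem_restrictTo_card_eq hsym hcard hLQ hS
    have hSL := (mem_restrictTo.1 hS).2.1
    have hS'L' := (mem_restrictTo.1 hS').2.1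
    refine ⟨S', hS', (mem_restrictTo.1 hS').2.2.mono inter_subset_left, fun b hb => ?_⟩
    obtain ⟨a, ha, hsub⟩ := exists_erase_inter_subset_erase_inter Q hS'card.le hSQ hb
    refine ⟨a, ha, ?_⟩
    rw [restrict_restrictTo_of_subset A Q ((erase_subset a S).trans hSL),
      restrict_restrictTo_of_subset A Q ((erase_subset b S').trans hS'L')]
    refine ih _ (hn ▸ (card_erase_lt_of_mem ha).trans_le (card_le_card hSL)) _ _ ?_ hsub rfl
    rw [card_erase_of_mem ha, card_erase_of_mem hb, hS'card]

/-- for a symmetric adversary, if `|L'| = |L|` and `L ∩ Q ⊆ L' ∩ Q`,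
then `setcon (A|_{L',Q}) ≥ setcon (A|_{L,Q})`. -/
theorem setcon_restrictTo_mono_of_symmetric [Fintype α] (A : Finset (Finset α))
    (hne : ∀ S ∈ A, S.Nonempty)
    (hsym : ∀ S ∈ A, ∀ S' : Finset α, S'.card = S.card → S' ∈ A)
    (Q L L' : Finset α) (hcard : L'.card = L.card) (hLQ : L ∩ Q ⊆ L' ∩ Q) :
    setcon (restrictTo A L Q) ≤ setcon (restrictTo A L' Q) :=
  setcon_restrictTo_mono_of_symmetric_general A hsym Q L L' hcard hLQ
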